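/- Let M and N be abelian groups (ℤ-modules) and let φ : M → N be a map whose deviation in n+1 variables vanishes: for all x : Fin (n+1) → M, ∑_{S ⊆ Fin (n+1)} (−1)^{n+1−|S|} • φ(∑_{i∈S} x i) = 0. Then φ automatically satisfies the scalar condition: for all r ∈ ℤ and x ∈ M, φ(r • x) = ∑_{k=0}^{n} Ring.choose r k • Δ_k φ x, where Ring.choose r k is the integer binomial coefficient. In other words, over ℤ every polynomial map of degree ≤ n is numerical of degree ≤ n. -/

import Mathlib

/-- The deviation Δ_k φ x. -/
def delta {M N : Type*} [AddCommMonoid M] [AddCommGroup N]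
    (φ : M → N) (k : ℕ) (x : M) : N :=
  ∑ j ∈ Finset.range (k + 1), ((-1 : ℤ) ^ (k - j) * (k.choose j : ℤ)) • φ (j • x)

/-!
Put `f t = φ (t • x)` on `ℤ`. Evaluating the vanishing deviation at `(y, x, …, x)` shows that
`Δ_x^n φ y` does not depend on `y`, so `Δ_1^(n+1) f = 0`. A function on `ℤ` is determined by
its forward difference and its value at `0`, so by induction on `n` it agrees with its
Gregory–Newton interpolation `∑ k ≤ n, (r choose k) • Δ_1^k f 0`, and `Δ_1^k f 0 = Δ_k φ x`.
-/

open Finset fwdDiff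

section FwdDiff

variable {M G : Type*} [AddCommMonoid M] [AddCommGroup G]

lemma fwdDiff_iter_comp_addMonoidHom {M' : Type*} [AddCommMonoid M'] (L : M' →+ M)
    (φ : M → G) (h : M') (k : ℕ) (y : M') :
    (Δ_[h])^[k] (φ ∘ L) y = (Δ_[L h])^[k] φ (L y) := by
  simp [fwdDiff_iter_eq_sum_shift]

lemma delta_eq_fwdDiff_iter (φ : M → G) (k : ℕ) (x : M) : delta φ k x = (Δ_[x])^[k] φ 0 := by
  simp [delta, fwdDiff_iter_eq_sum_shift]

lemma sum_powerset_neg_one_pow_smul_eq_fwdDiff_iter {ι : Type*} (s : Finset ι) (φ : M → G)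
    (x y : M) :
    ∑ T ∈ s.powerset, (-1 : ℤ) ^ (#s - #T) • φ (y + #T • x) = (Δ_[x])^[#s] φ y := by
  rw [sum_powerset_apply_card (fun j ↦ (-1 : ℤ) ^ (#s - j) • φ (y + j • x)),
    fwdDiff_iter_eq_sum_shift]
  refine sum_congr rfl fun j _ ↦ ?_
  rw [mul_comm, mul_smul, natCast_zsmul]

lemma sum_update_const_of_notMem {ι : Type*} [DecidableEq ι] {T : Finset ι} {a : ι} (ha : a ∉ T)
    (x y : M) : ∑ i ∈ T, Function.update (fun _ ↦ x) a y i = #T • x := by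
  rw [sum_congr rfl fun i hi ↦ Function.update_of_ne (ne_of_mem_of_not_mem hi ha) _ _, sum_const]

lemma sum_powerset_insert_update_eq_fwdDiff_iter_sub {ι : Type*} [DecidableEq ι] {s : Finset ι}
    {a : ι} (ha : a ∉ s) (φ : M → G) (x y : M) :
    ∑ S ∈ (insert a s).powerset,
        (-1 : ℤ) ^ (#s + 1 - #S) • φ (∑ i ∈ S, Function.update (fun _ ↦ x) a y i)
      = (Δ_[x])^[#s] φ y - (Δ_[x])^[#s] φ 0 := by
  rw [sum_powerset_insert ha, ← sum_powerset_neg_one_pow_smul_eq_fwdDiff_iter s φ x y,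
    ← sum_powerset_neg_one_pow_smul_eq_fwdDiff_iter s φ x 0, sub_eq_neg_add, ← sum_neg_distrib]
  congr 1
  · refine sum_congr rfl fun T hT ↦ ?_
    have hTs : #T ≤ #s := card_le_card (mem_powerset.1 hT)
    rw [sum_update_const_of_notMem (fun h ↦ ha (mem_powerset.1 hT h)), zero_add,
      show #s + 1 - #T = #s - #T + 1 by omega, pow_succ, mul_neg_one, neg_smul]
  · refine sum_congr rfl fun T hT ↦ ?_
    have haT : a ∉ T := fun h ↦ ha (mem_powerset.1 hT h)
    rw [sum_insert haT, Function.update_self, sum_update_const_of_notMem haT,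
      card_insert_of_notMem haT, Nat.add_sub_add_right]

end FwdDiff

section Newton

variable {G : Type*} [AddCommGroup G]

lemma fwdDiff_sum_choose_smul {R : Type*} [Ring R] [BinomialRing R] [Module R G] (n : ℕ)
    (c : ℕ → G) :
    Δ_[1] (fun r : R ↦ ∑ k ∈ range (n + 1), Ring.choose r k • c k)
      = fun r ↦ ∑ k ∈ range n, Ring.choose r k • c (k + 1) := by
  funext r
  simp only [fwdDiff, sum_range_succ' _ n, Ring.choose_succ_succ, Ring.choose_zero_right,
    add_smul, sum_add_distrib]
  abel

lemma Int.eq_of_fwdDiff_eq {f g : ℤ → G} (hΔ : Δ_[1] f = Δ_[1] g) (h0 : f 0 = g 0) : f = g := by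
  funext r
  induction r using Int.induction_on with
  | zero => exact h0
  | succ k ih =>
    have hk : f (k + 1) - f k = g (k + 1) - g k := congrFun hΔ k
    rw [← sub_add_cancel (f (k + 1)) (f k), hk, ih, sub_add_cancel]
  | pred k ih =>
    have hk : f (-k - 1 + 1) - f (-k - 1) = g (-k - 1 + 1) - g (-k - 1) := congrFun hΔ (-k - 1)
    rw [sub_add_cancel] at hk
    rw [← sub_sub_cancel (f (-k)) (f (-k - 1)), hk, ih, sub_sub_cancel]

theorem Int.eq_sum_choose_smul_fwdDiff_iter {f : ℤ → G} {n : ℕ} (hf : (Δ_[1])^[n] f = 0) (r : ℤ) :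
    f r = ∑ k ∈ Finset.range n, Ring.choose r k • (Δ_[1])^[k] f 0 := by
  induction n generalizing f r with
  | zero => simp [show f = 0 from hf]
  | succ n ih =>
    revert r
    rw [← funext_iff]
    refine Int.eq_of_fwdDiff_eq ?_ ?_
    · rw [fwdDiff_sum_choose_smul]
      funext r
      rw [ih (f := Δ_[1] f) hf r]
      simp only [Function.iterate_succ_apply]
    · simp [sum_range_succ', Ring.choose_zero_succ]

end Newton

/-- **Over ℤ, polynomial maps are automatically numerical.** If the deviation of
`φ : M → N` in `n + 1` variables vanishes, then the scalar condition
`φ(r • x) = ∑_{k=0}^{n} (r choose k) • Δ_k φ x` holds for all `r : ℤ`. -/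
theorem polynomial_int_is_numerical {M N : Type*} [AddCommGroup M] [AddCommGroup N]
    (n : ℕ) (φ : M → N)
    (hdev : ∀ x : Fin (n + 1) → M,
      ∑ S : Finset (Fin (n + 1)), ((-1 : ℤ) ^ (n + 1 - S.card)) • φ (∑ i ∈ S, x i) = 0) :
    ∀ (r : ℤ) (x : M),
      φ (r • x) = ∑ k ∈ Finset.range (n + 1), Ring.choose r k • delta φ k x := by
  intro r x
  have hconst : ∀ y, (Δ_[x])^[n] φ y = (Δ_[x])^[n] φ 0 := fun y ↦ by
    have h := sum_powerset_insert_update_eq_fwdDiff_iter_sub (notMem_erase (0 : Fin (n + 1)) univ)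
      φ x y
    rw [insert_erase (mem_univ _), powerset_univ, card_erase_of_mem (mem_univ _), card_univ,
      Fintype.card_fin, add_tsub_cancel_right, hdev] at h
    exact sub_eq_zero.1 h.symm
  have hvanish : (Δ_[1])^[n + 1] (φ ∘ zmultiplesHom M x) = 0 := by
    funext t
    rw [fwdDiff_iter_comp_addMonoidHom, Function.iterate_succ_apply', fwdDiff]
    simp only [zmultiplesHom_apply, one_zsmul]
    rw [hconst (_ + _), hconst (t • x), sub_self, Pi.zero_apply]
  simpa [fwdDiff_iter_comp_addMonoidHom, delta_eq_fwdDiff_iter] using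
    Int.eq_sum_choose_smul_fwdDiff_iter hvanish r
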